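/- Fix k ∈ ℕ, Δ > 0 and ε > 0, and set b = Δ/ε. For a ∈ ℝ^k let μ_a be the measure on ℝ^k with density x ↦ ∏_{j=1}^k (1/(2b))·exp(−|x_j − a_j|/b) with respect to Lebesgue measure. If a, a' ∈ ℝ^k satisfy Σ_{j=1}^k |a_j − a'_j| ≤ Δ, then for every measurable set S ⊆ ℝ^k, μ_a(S) ≤ e^ε · μ_{a'}(S). In other words, releasing a vector-valued quantity of L1-sensitivity at most Δ after adding i.i.d. Laplace noise of scale Δ/ε to each coordinate satisfies the ε-differential-privacy bound. -/

import Mathlib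

open MeasureTheory Real
open scoped ENNReal

/-! The ratio of two Laplace densities of scale `b` centred at `m` and `m'` is at most
`exp (|m - m'| / b)` by the triangle inequality, so on `ℝ^k` the ratio of the product densities is
at most `exp (‖a - a'‖₁ / b)`, which is `≤ exp ε` when `‖a - a'‖₁ ≤ Δ = ε b`. A pointwise bound on
densities integrates to the same bound on measures. -/

theorem MeasureTheory.withDensity_le_smul_withDensity {α : Type*} [MeasurableSpace α]
    {μ : Measure α} {f g : α → ℝ≥0∞} {c : ℝ≥0∞} (hc : c ≠ ∞) (hfg : f ≤ᵐ[μ] c • g) :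
    μ.withDensity f ≤ c • μ.withDensity g := by
  rw [← withDensity_smul' c g hc]
  exact withDensity_mono hfg

noncomputable def laplaceDensity (b m t : ℝ) : ℝ :=
  1 / (2 * b) * exp (-|t - m| / b)

lemma laplaceDensity_nonneg {b : ℝ} (hb : 0 < b) (m t : ℝ) : 0 ≤ laplaceDensity b m t := by
  unfold laplaceDensity
  positivity

lemma laplaceDensity_le_exp_mul {b : ℝ} (hb : 0 < b) (m m' t : ℝ) :
    laplaceDensity b m t ≤ exp (|m - m'| / b) * laplaceDensity b m' t := by
  unfold laplaceDensity
  rw [mul_left_comm, ← exp_add, ← add_div]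
  gcongr
  linarith [abs_sub_le t m m']

lemma prod_laplaceDensity_le_exp_mul {ι : Type*} [Fintype ι] {b : ℝ} (hb : 0 < b)
    (a a' x : ι → ℝ) :
    ∏ j, laplaceDensity b (a j) (x j) ≤
      exp ((∑ j, |a j - a' j|) / b) * ∏ j, laplaceDensity b (a' j) (x j) := by
  rw [Finset.sum_div, exp_sum, ← Finset.prod_mul_distrib]
  exact Finset.prod_le_prod (fun j _ ↦ laplaceDensity_nonneg hb _ _)
    (fun j _ ↦ laplaceDensity_le_exp_mul hb _ _ _)

theorem withDensity_prod_laplaceDensity_le {ι : Type*} [Fintype ι]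
    {b : ℝ} (hb : 0 < b) (a a' : ι → ℝ) :
    volume.withDensity (fun x : ι → ℝ ↦ ENNReal.ofReal (∏ j, laplaceDensity b (a j) (x j))) ≤
      ENNReal.ofReal (exp ((∑ j, |a j - a' j|) / b)) •
        volume.withDensity
          (fun x : ι → ℝ ↦ ENNReal.ofReal (∏ j, laplaceDensity b (a' j) (x j))) := by
  refine withDensity_le_smul_withDensity ENNReal.ofReal_ne_top (ae_of_all _ fun x ↦ ?_)
  rw [Pi.smul_apply, smul_eq_mul, ← ENNReal.ofReal_mul (exp_nonneg _)]
  exact ENNReal.ofReal_le_ofReal (prod_laplaceDensity_le_exp_mul hb a a' x)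

theorem laplace_mechanism_dp_bound_general
    (k : ℕ) (Δ ε : ℝ) (hΔ : 0 < Δ) (hε : 0 < ε) (b : ℝ) (hb : b = Δ / ε)
    (a a' : Fin k → ℝ) (hsens : ∑ j, |a j - a' j| ≤ Δ)
    (S : Set (Fin k → ℝ)) :
    (volume.withDensity
        (fun x => ENNReal.ofReal (∏ j, (1 / (2 * b)) * Real.exp (-|x j - a j| / b)))) S ≤
      ENNReal.ofReal (Real.exp ε) *
        (volume.withDensity
          (fun x => ENNReal.ofReal (∏ j, (1 / (2 * b)) * Real.exp (-|x j - a' j| / b)))) S := by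
  have hb0 : 0 < b := hb ▸ div_pos hΔ hε
  have hbudget : (∑ j, |a j - a' j|) / b ≤ ε := by
    rw [div_le_iff₀ hb0, hb, mul_div_cancel₀ _ hε.ne']
    exact hsens
  calc _ ≤ ENNReal.ofReal (exp ((∑ j, |a j - a' j|) / b)) *
          (volume.withDensity
            (fun x ↦ ENNReal.ofReal (∏ j, laplaceDensity b (a' j) (x j)))) S :=
        withDensity_prod_laplaceDensity_le hb0 a a' S
    _ ≤ _ := by gcongr; rfl

/-- **The multivariate Laplace mechanism satisfies the ε-DP bound.**
Fix `k`, `Δ > 0`, `ε > 0` and set `b = Δ / ε`.  For `a : Fin k → ℝ` let `μ_a` be the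
measure on `ℝ^k` with density `x ↦ ∏ j, (1/(2b)) exp (-|x j - a j| / b)` with respect
to Lebesgue measure.  If `a, a'` satisfy `∑ j, |a j - a' j| ≤ Δ` (L1-sensitivity at
most `Δ`), then for every measurable set `S`, `μ_a S ≤ e^ε · μ_{a'} S`. -/
theorem laplace_mechanism_dp_bound
    (k : ℕ) (Δ ε : ℝ) (hΔ : 0 < Δ) (hε : 0 < ε) (b : ℝ) (hb : b = Δ / ε)
    (a a' : Fin k → ℝ) (hsens : ∑ j, |a j - a' j| ≤ Δ)
    (S : Set (Fin k → ℝ)) (hS : MeasurableSet S) :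
    (volume.withDensity
        (fun x => ENNReal.ofReal (∏ j, (1 / (2 * b)) * Real.exp (-|x j - a j| / b)))) S ≤
      ENNReal.ofReal (Real.exp ε) *
        (volume.withDensity
          (fun x => ENNReal.ofReal (∏ j, (1 / (2 * b)) * Real.exp (-|x j - a' j| / b)))) S :=
  laplace_mechanism_dp_bound_general k Δ ε hΔ hε b hb a a' hsens S
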